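/- arXiv:0911.4027 — 14 statements merged into one kernel-verified Lean document; each statement's English description precedes it below -/
import Mathlib

section
/- Let P and Q be n×n real symmetric idempotent matrices and λ a real scalar such that Q·P·Q = λ·Q and Q ≠ 0. Then 0 ≤ λ ≤ 1. -/
/-!
In the Loewner order `q p q` and `q (1 - p) q` are nonnegative, being conjugates of the
nonnegative projections `p` and `1 - p` by the self-adjoint `q`. Balance turns them into `λ q`
and `(1 - λ) q`, and a nonzero nonnegative `q` has `0 ≤ c • q` only for `0 ≤ c`.
-/

open Matrix

section OrderedModule

variable {𝕜 M : Type*} [Field 𝕜] [LinearOrder 𝕜] [IsStrictOrderedRing 𝕜]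
  [AddCommGroup M] [PartialOrder M] [IsOrderedAddMonoid M] [Module 𝕜 M] [PosSMulMono 𝕜 M]

theorem nonneg_of_smul_nonneg_of_ne_zero {q : M} {c : 𝕜} (hq : 0 ≤ q) (hq0 : q ≠ 0)
    (h : 0 ≤ c • q) : 0 ≤ c := by
  by_contra! hc
  refine hq0 (le_antisymm ?_ hq)
  have : 0 ≤ (-c⁻¹) • c • q := smul_nonneg (neg_nonneg.2 (inv_nonpos.2 hc.le)) h
  rwa [smul_smul, neg_mul, inv_mul_cancel₀ hc.ne, neg_smul, one_smul, neg_nonneg] at this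

end OrderedModule

theorem IsStarProjection.mem_Icc_of_mul_mul_eq_smul {𝕜 R : Type*} [Field 𝕜] [LinearOrder 𝕜]
    [IsStrictOrderedRing 𝕜] [Ring R] [PartialOrder R] [StarRing R] [StarOrderedRing R]
    [Module 𝕜 R] [PosSMulMono 𝕜 R] {p q : R} (hp : IsStarProjection p)
    (hq : IsStarProjection q) (hq0 : q ≠ 0) {c : 𝕜} (h : q * p * q = c • q) :
    c ∈ Set.Icc 0 1 := by
  have h_compl : q * (1 - p) * q = (1 - c) • q := by
    rw [mul_sub, sub_mul, mul_one, hq.isIdempotentElem.eq, h, sub_smul, one_smul]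
  constructor
  · exact nonneg_of_smul_nonneg_of_ne_zero hq.nonneg hq0
      (h ▸ hq.isSelfAdjoint.conjugate_nonneg hp.nonneg)
  · exact sub_nonneg.1 <| nonneg_of_smul_nonneg_of_ne_zero hq.nonneg hq0
      (h_compl ▸ hq.isSelfAdjoint.conjugate_nonneg hp.one_sub.nonneg)

open scoped MatrixOrder ComplexOrder in
instance Matrix.posSMulMono {n 𝕜 : Type*} [Fintype n] [RCLike 𝕜] :
    PosSMulMono ℝ (Matrix n n 𝕜) :=
  PosSMulMono.of_smul_nonneg fun _ ha _ hb => (hb.posSemidef.smul ha).nonneg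

theorem Matrix.isStarProjection_of_transpose_eq {n R : Type*} [Fintype n]
    [NonUnitalNonAssocSemiring R] [Star R] [TrivialStar R] {P : Matrix n n R} (hsym : Pᵀ = P) (hidem : P * P = P) :
    IsStarProjection P :=
  ⟨hidem, by rwa [IsSelfAdjoint, star_eq_conjTranspose, conjTranspose_eq_transpose_of_trivial]⟩

/-- Efficiency factors necessarily lie between 0 and 1. -/
theorem efficiency_factor_mem_unitInterval
    {n : ℕ} (P Q : Matrix (Fin n) (Fin n) ℝ)
    (hPsym : Pᵀ = P) (hPidem : P * P = P)
    (hQsym : Qᵀ = Q) (hQidem : Q * Q = Q)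
    (lam : ℝ) (hbal : Q * P * Q = lam • Q) (hQne : Q ≠ 0) :
    0 ≤ lam ∧ lam ≤ 1 := by
  open scoped MatrixOrder in
  exact (isStarProjection_of_transpose_eq hPsym hPidem).mem_Icc_of_mul_mul_eq_smul
    (isStarProjection_of_transpose_eq hQsym hQidem) hQne hbal
end

section
/- Let P and Q be n×n real symmetric idempotent matrices and λ a nonzero real scalar with Q·P·Q = λ·Q. Then the matrix λ⁻¹·P·Q·P is a symmetric idempotent. -/
open Matrix

theorem Matrix.IsSymm.mul_mul_self {n α : Type*} [Fintype n] [CommSemiring α]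
    {A B : Matrix n n α} (hA : A.IsSymm) (hB : B.IsSymm) : (A * B * A).IsSymm := by
  rw [IsSymm, transpose_mul, transpose_mul, hA.eq, hB.eq, Matrix.mul_assoc]

theorem IsIdempotentElem.mul_mul_mul_self_eq_smul {R A : Type*} [CommSemiring R] [Semiring A]
    [Algebra R A] {p q : A} {c : R} (hp : IsIdempotentElem p) (hbal : q * p * q = c • q) :
    p * q * p * (p * q * p) = c • (p * q * p) :=
  calc p * q * p * (p * q * p) = p * (q * (p * p) * q) * p := by simp only [mul_assoc]
    _ = c • (p * q * p) := by rw [hp.eq, hbal, mul_smul_comm, smul_mul_assoc]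

theorem isIdempotentElem_inv_smul_of_mul_self_eq_smul {K A : Type*} [Field K] [Semiring A]
    [Algebra K A] {x : A} {c : K} (h : x * x = c • x) : IsIdempotentElem (c⁻¹ • x) := by
  have hc : c⁻¹ * c⁻¹ * c = c⁻¹ := by simpa only [inv_inv] using mul_self_mul_inv c⁻¹
  rw [IsIdempotentElem, smul_mul_smul_comm, h, smul_smul, hc]

theorem pertaining_projector_isSymmIdem_general
    {n : ℕ} (P Q : Matrix (Fin n) (Fin n) ℝ)
    (hPsym : Pᵀ = P) (hPidem : P * P = P)
    (hQsym : Qᵀ = Q)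
    (lam : ℝ) (hbal : Q * P * Q = lam • Q) :
    (lam⁻¹ • (P * Q * P))ᵀ = lam⁻¹ • (P * Q * P) ∧
      (lam⁻¹ • (P * Q * P)) * (lam⁻¹ • (P * Q * P)) = lam⁻¹ • (P * Q * P) :=
  ⟨(IsSymm.mul_mul_self hPsym hQsym).smul lam⁻¹,
    isIdempotentElem_inv_smul_of_mul_self_eq_smul
      (IsIdempotentElem.mul_mul_mul_self_eq_smul hPidem hbal)⟩

/-- James–Wilkinson: if `Q P Q = λ Q` with `λ ≠ 0`, then the pertaining projector
`P ▷ Q := λ⁻¹ P Q P` is a symmetric idempotent. -/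
theorem pertaining_projector_isSymmIdem
    {n : ℕ} (P Q : Matrix (Fin n) (Fin n) ℝ)
    (hPsym : Pᵀ = P) (hPidem : P * P = P)
    (hQsym : Qᵀ = Q) (hQidem : Q * Q = Q)
    (lam : ℝ) (hlam : lam ≠ 0) (hbal : Q * P * Q = lam • Q) :
    (lam⁻¹ • (P * Q * P))ᵀ = lam⁻¹ • (P * Q * P) ∧
      (lam⁻¹ • (P * Q * P)) * (lam⁻¹ • (P * Q * P)) = lam⁻¹ • (P * Q * P) :=
  pertaining_projector_isSymmIdem_general P Q hPsym hPidem hQsym lam hbal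
end

section
/- Let P and Q be n×n real symmetric idempotent matrices and λ a nonzero real scalar with Q·P·Q = λ·Q. Then the column space of λ⁻¹·P·Q·P equals the image P(Im Q) of the column space of Q under P, i.e., the range of the linear map given by P·Q·P equals the range of the linear map given by P·Q. -/
open Matrix

theorem Matrix.range_mulVecLin_mul_le {R : Type*} [CommSemiring R] {l m n : Type*} [Fintype m]
    [Fintype n] (A : Matrix l m R) (B : Matrix m n R) :
    LinearMap.range (A * B).mulVecLin ≤ LinearMap.range A.mulVecLin := by
  rw [mulVecLin_mul]
  exact LinearMap.range_comp_le_range _ _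

theorem Matrix.range_mulVecLin_smul {K : Type*} [Field K] {m n : Type*} [Fintype n]
    (A : Matrix m n K) {c : K} (hc : c ≠ 0) :
    LinearMap.range (c • A).mulVecLin = LinearMap.range A.mulVecLin := by
  rw [← LinearMap.range_smul A.mulVecLin c hc, ← map_smul]

theorem Matrix.range_mulVecLin_mul_mul_eq_of_mul_mul_eq_smul {K : Type*} [Field K]
    {m n : Type*} [Fintype m] [Fintype n] (P : Matrix m n K) (Q : Matrix n m K) {c : K}
    (hc : c ≠ 0) (hbal : Q * P * Q = c • Q) :
    LinearMap.range (P * Q * P).mulVecLin = LinearMap.range (P * Q).mulVecLin := by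
  have hPQPQ : P * Q * P * Q = c • (P * Q) := by
    rw [Matrix.mul_assoc (P * Q), Matrix.mul_assoc P, ← Matrix.mul_assoc Q, hbal,
      Matrix.mul_smul]
  refine le_antisymm (range_mulVecLin_mul_le _ _) ?_
  calc LinearMap.range (P * Q).mulVecLin
      = LinearMap.range (c • (P * Q)).mulVecLin := (range_mulVecLin_smul _ hc).symm
    _ = LinearMap.range (P * Q * P * Q).mulVecLin := by rw [hPQPQ]
    _ ≤ LinearMap.range (P * Q * P).mulVecLin := range_mulVecLin_mul_le _ _

theorem pertaining_projector_range_general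
    {n : ℕ} (P Q : Matrix (Fin n) (Fin n) ℝ)
    (lam : ℝ) (hlam : lam ≠ 0) (hbal : Q * P * Q = lam • Q) :
    LinearMap.range (P * Q * P).mulVecLin = LinearMap.range (P * Q).mulVecLin :=
  range_mulVecLin_mul_mul_eq_of_mul_mul_eq_smul P Q hlam hbal

/-- James–Wilkinson: if `Q P Q = λ Q` with `λ ≠ 0`, then `λ⁻¹ P Q P` projects
onto `P(Im Q)`: the range of the linear map given by `P * Q * P` equals the
range of the linear map given by `P * Q`. -/
theorem pertaining_projector_range
    {n : ℕ} (P Q : Matrix (Fin n) (Fin n) ℝ)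
    (hPsym : Pᵀ = P) (hPidem : P * P = P)
    (hQsym : Qᵀ = Q) (hQidem : Q * Q = Q)
    (lam : ℝ) (hlam : lam ≠ 0) (hbal : Q * P * Q = lam • Q) :
    LinearMap.range (P * Q * P).mulVecLin = LinearMap.range (P * Q).mulVecLin :=
  pertaining_projector_range_general P Q lam hlam hbal
end

section
/- Let P and Q be n×n real symmetric idempotent matrices and λ a nonzero real scalar with Q·P·Q = λ·Q and Q ≠ 0. Then λ is the unique nonzero eigenvalue of P·Q·P: every nonzero eigenvalue of P·Q·P equals λ, and λ is an eigenvalue of P·Q·P. -/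
/-!
Write `A = P Q P`. Idempotence of `P` and the balance `Q P Q = λ Q` give `A² = λ A`, so
`μ² v = λ μ v` for an eigenpair `(μ, v)` of `A`, forcing `μ = λ` when `μ ≠ 0`. For existence,
take `y` with `Q y ≠ 0`: then `A (P Q y) = P (Q P Q) y = λ (P Q y)`, and `P Q y ≠ 0`
because `Q P (P Q y) = λ Q y ≠ 0`.
-/

open Matrix

section

variable {m R : Type*} [Fintype m] [CommRing R]

theorem Matrix.eq_of_mul_self_eq_smul_of_mulVec_eq_smul [IsDomain R] {A : Matrix m m R}
    {c μ : R} (hA : A * A = c • A) {v : m → R} (hv : v ≠ 0) (hμ : μ ≠ 0)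
    (hev : A *ᵥ v = μ • v) : μ = c := by
  have hsq : (μ * μ) • v = (c * μ) • v := by
    rw [← smul_smul, ← smul_smul, ← hev, ← mulVec_smul, ← hev, mulVec_mulVec, hA,
      smul_mulVec]
  exact mul_right_cancel₀ hμ (smul_left_injective R hv hsq)

variable {P Q : Matrix m m R} {c : R}

theorem Matrix.mul_mul_mul_self_eq_smul (hP : P * P = P) (hbal : Q * P * Q = c • Q) :
    (P * Q * P) * (P * Q * P) = c • (P * Q * P) := by
  calc (P * Q * P) * (P * Q * P) = P * (Q * (P * P) * Q) * P := by noncomm_ring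
    _ = c • (P * Q * P) := by rw [hP, hbal, Matrix.mul_smul, Matrix.smul_mul]

theorem Matrix.mul_mul_mulVec_mul_mulVec_eq_smul (hP : P * P = P) (hbal : Q * P * Q = c • Q)
    (y : m → R) : (P * Q * P) *ᵥ ((P * Q) *ᵥ y) = c • ((P * Q) *ᵥ y) := by
  have hcol : (P * Q * P) * (P * Q) = c • (P * Q) := by
    calc (P * Q * P) * (P * Q) = P * (Q * (P * P) * Q) := by noncomm_ring
      _ = c • (P * Q) := by rw [hP, hbal, Matrix.mul_smul]
  rw [mulVec_mulVec, hcol, smul_mulVec]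

theorem Matrix.mul_mulVec_ne_zero [IsDomain R] (hP : P * P = P) (hbal : Q * P * Q = c • Q)
    (hc : c ≠ 0) {y : m → R} (hy : Q *ᵥ y ≠ 0) : (P * Q) *ᵥ y ≠ 0 := by
  intro h
  have hQPv : (Q * P) *ᵥ ((P * Q) *ᵥ y) = c • (Q *ᵥ y) := by
    rw [mulVec_mulVec, ← smul_mulVec, ← hbal]
    congr 1
    calc Q * P * (P * Q) = Q * (P * P) * Q := by noncomm_ring
      _ = Q * P * Q := by rw [hP]
  rw [h, mulVec_zero] at hQPv
  exact smul_ne_zero hc hy hQPv.symm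

theorem Matrix.exists_mulVec_ne_zero {A : Matrix m m R} (hA : A ≠ 0) : ∃ y, A *ᵥ y ≠ 0 := by
  by_contra! h
  exact hA (ext_iff_mulVec.mpr fun y => by rw [h, zero_mulVec])

end

theorem efficiency_factor_unique_nonzero_eigenvalue_general
    {n : ℕ} (P Q : Matrix (Fin n) (Fin n) ℝ)
    (hPidem : P * P = P)
    (lam : ℝ) (hlam : lam ≠ 0) (hbal : Q * P * Q = lam • Q) (hQne : Q ≠ 0) :
    (∀ μ : ℝ, μ ≠ 0 →
        (∃ v : Fin n → ℝ, v ≠ 0 ∧ (P * Q * P).mulVec v = μ • v) → μ = lam) ∧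
      (∃ v : Fin n → ℝ, v ≠ 0 ∧ (P * Q * P).mulVec v = lam • v) := by
  refine ⟨fun μ hμ ⟨v, hv, hev⟩ => ?_, ?_⟩
  · exact eq_of_mul_self_eq_smul_of_mulVec_eq_smul (mul_mul_mul_self_eq_smul hPidem hbal)
      hv hμ hev
  · obtain ⟨y, hy⟩ := exists_mulVec_ne_zero hQne
    exact ⟨(P * Q) *ᵥ y, mul_mulVec_ne_zero hPidem hbal hlam hy,
      mul_mul_mulVec_mul_mulVec_eq_smul hPidem hbal y⟩

/-- James–Wilkinson: if `Q P Q = λ Q` with `λ ≠ 0` and `Q ≠ 0`, then `λ` is the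
unique nonzero eigenvalue of `P Q P`. -/
theorem efficiency_factor_unique_nonzero_eigenvalue
    {n : ℕ} (P Q : Matrix (Fin n) (Fin n) ℝ)
    (hPsym : Pᵀ = P) (hPidem : P * P = P)
    (hQsym : Qᵀ = Q) (hQidem : Q * Q = Q)
    (lam : ℝ) (hlam : lam ≠ 0) (hbal : Q * P * Q = lam • Q) (hQne : Q ≠ 0) :
    (∀ μ : ℝ, μ ≠ 0 →
        (∃ v : Fin n → ℝ, v ≠ 0 ∧ (P * Q * P).mulVec v = μ • v) → μ = lam) ∧
      (∃ v : Fin n → ℝ, v ≠ 0 ∧ (P * Q * P).mulVec v = lam • v) :=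
  efficiency_factor_unique_nonzero_eigenvalue_general P Q hPidem lam hlam hbal hQne
end

section
/- Let P and Q be n×n real symmetric idempotent matrices and λ a nonzero real scalar with Q·P·Q = λ·Q. Then rank(P·Q·P) = rank(Q); equivalently, the subspace P(Im Q) has the same dimension as the column space of Q. -/
open Matrix

theorem mul_mul_mul_eq_sq_smul_of_mul_mul_eq_smul {R A : Type*} [CommSemiring R] [Semiring A]
    [Algebra R A] {c : R} {p q : A} (h : q * p * q = c • q) :
    q * (p * q * p) * q = c ^ 2 • q := by
  calc q * (p * q * p) * q = (q * p * q) * (p * q) := by simp only [mul_assoc]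
    _ = c ^ 2 • q := by rw [h, smul_mul_assoc, ← mul_assoc, h, smul_smul, sq]

theorem Matrix.rank_le_rank_of_mul_mul_eq_smul {R m n : Type*} [CommRing R] [IsDomain R]
    [Fintype m] [Fintype n] {c : R} (hc : c ≠ 0) {Q : Matrix m n R} {M : Matrix n m R}
    (h : Q * M * Q = c • Q) : Q.rank ≤ M.rank :=
  calc Q.rank = (c • Q).rank := (rank_smul_of_mem_nonZeroDivisors Q
          (mem_nonZeroDivisors_of_ne_zero hc)).symm
    _ = (Q * M * Q).rank := by rw [h]
    _ ≤ M.rank := (rank_mul_le_left _ _).trans (rank_mul_le_right _ _)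

theorem rank_pertaining_eq_rank_general
    {n : ℕ} (P Q : Matrix (Fin n) (Fin n) ℝ)
    (lam : ℝ) (hlam : lam ≠ 0) (hbal : Q * P * Q = lam • Q) :
    (P * Q * P).rank = Q.rank :=
  le_antisymm ((rank_mul_le_left _ _).trans (rank_mul_le_right _ _))
    (rank_le_rank_of_mul_mul_eq_smul (pow_ne_zero 2 hlam)
      (mul_mul_mul_eq_sq_smul_of_mul_mul_eq_smul hbal))

/-- If `Q P Q = λ Q` with `λ ≠ 0`, then `rank (P Q P) = rank Q`: the projected
space `P(Im Q)` has the same dimension as `Im Q`. -/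
theorem rank_pertaining_eq_rank
    {n : ℕ} (P Q : Matrix (Fin n) (Fin n) ℝ)
    (hPsym : Pᵀ = P) (hPidem : P * P = P)
    (hQsym : Qᵀ = Q) (hQidem : Q * Q = Q)
    (lam : ℝ) (hlam : lam ≠ 0) (hbal : Q * P * Q = lam • Q) :
    (P * Q * P).rank = Q.rank :=
  rank_pertaining_eq_rank_general P Q lam hlam hbal
end

section
/- Let P and Q be n×n real symmetric idempotent matrices with Q·P·Q = Q (efficiency factor 1). Then P·Q = Q = Q·P, P·Q·P = Q, and the column space of Q is contained in the column space of P. -/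
/-!
With `x = P Q - Q`, expanding `xᴴ x = Q P P Q - Q P Q - Q P Q + Q Q` and using idempotence and
`Q P Q = Q` gives `xᴴ x = 0`, hence `x = 0`, i.e. `P Q = Q`. Transposing gives `Q P = Q`, and
`Im Q = Im (P Q) ≤ Im P`.
-/

open Matrix

namespace IsStarProjection

variable {R : Type*} [NonUnitalRing R] [StarRing R] {p q : R}

lemma star_mul_self_mul_sub_self_eq_zero (hp : IsStarProjection p) (hq : IsStarProjection q)
    (h : q * p * q = q) : star (p * q - q) * (p * q - q) = 0 := by
  have hstar : star (p * q - q) = q * p - q := by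
    rw [star_sub, star_mul, hp.isSelfAdjoint.star_eq, hq.isSelfAdjoint.star_eq]
  have hqppq : q * p * (p * q) = q := by
    rw [← mul_assoc, mul_assoc q, hp.isIdempotentElem.eq, h]
  calc star (p * q - q) * (p * q - q)
      = q * p * (p * q) - q * p * q - q * p * q + q * q := by rw [hstar]; noncomm_ring
    _ = 0 := by rw [hqppq, h, hq.isIdempotentElem.eq]; abel

end IsStarProjection

lemma IsSelfAdjoint.mul_eq_left_of_mul_eq_right {R : Type*} [Mul R] [StarMul R] {p q : R}
    (hp : IsSelfAdjoint p) (hq : IsSelfAdjoint q) (h : p * q = q) : q * p = q := by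
  simpa only [star_mul, hp.star_eq, hq.star_eq] using congrArg star h

namespace Matrix

variable {m n R : Type*} [Fintype m]

lemma mul_eq_right_of_mul_mul_eq_self [PartialOrder R] [NonUnitalRing R] [StarRing R]
    [StarOrderedRing R] [NoZeroDivisors R] {P Q : Matrix m m R} (hP : IsStarProjection P)
    (hQ : IsStarProjection Q) (h : Q * P * Q = Q) : P * Q = Q :=
  sub_eq_zero.mp <| conjTranspose_mul_self_eq_zero.mp <|
    hP.star_mul_self_mul_sub_self_eq_zero hQ h

lemma range_mulVecLin_le_of_mul_eq_right [Fintype n] [CommSemiring R] {A : Matrix m m R}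
    {B : Matrix m n R} (h : A * B = B) :
    LinearMap.range B.mulVecLin ≤ LinearMap.range A.mulVecLin := by
  rw [← h, mulVecLin_mul]
  exact LinearMap.range_comp_le_range _ _

lemma isStarProjection_of_transpose_eq_s8 [Fintype n] [Mul R] [AddCommMonoid R] [Star R] [TrivialStar R]
    {A : Matrix n n R} (hsymm : Aᵀ = A) (hidem : A * A = A) : IsStarProjection A :=
  ⟨hidem, (isHermitian_iff_isSymm.mpr hsymm).isSelfAdjoint⟩

end Matrix

/-- Lemma 4.1: if the efficiency factor is 1, i.e. `Q P Q = Q`, then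
`P Q = Q = Q P`, `P Q P = Q`, and `Im Q ≤ Im P`. -/
theorem efficiency_one_of_first_order_balance
    {n : ℕ} (P Q : Matrix (Fin n) (Fin n) ℝ)
    (hPsym : Pᵀ = P) (hPidem : P * P = P)
    (hQsym : Qᵀ = Q) (hQidem : Q * Q = Q)
    (hbal : Q * P * Q = Q) :
    P * Q = Q ∧ Q * P = Q ∧ P * Q * P = Q ∧
      LinearMap.range Q.mulVecLin ≤ LinearMap.range P.mulVecLin := by
  have hP := isStarProjection_of_transpose_eq_s8 hPsym hPidem
  have hQ := isStarProjection_of_transpose_eq_s8 hQsym hQidem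
  have hPQ : P * Q = Q := mul_eq_right_of_mul_mul_eq_self hP hQ hbal
  have hQP : Q * P = Q := hP.isSelfAdjoint.mul_eq_left_of_mul_eq_right hQ.isSelfAdjoint hPQ
  exact ⟨hPQ, hQP, by rw [hPQ, hQP], range_mulVecLin_le_of_mul_eq_right hPQ⟩
end

section
/- Let P be an n×n real symmetric idempotent matrix and let Q₁, Q₂ be n×n real symmetric idempotent matrices with Q₁·P·Q₂ = 0, Q₁·P·Q₁ = λ₁·Q₁ and Q₂·P·Q₂ = λ₂·Q₂ for nonzero real scalars λ₁, λ₂. Then (λ₁⁻¹·P·Q₁·P)·(λ₂⁻¹·P·Q₂·P) = 0; that is, the pertaining projectors P▷Q₁ and P▷Q₂ project onto mutually orthogonal subspaces of Im P. -/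
open Matrix

theorem IsIdempotentElem.compress_mul_compress_eq_zero {M : Type*} [SemigroupWithZero M]
    {p q₁ q₂ : M} (hp : IsIdempotentElem p) (h : q₁ * p * q₂ = 0) :
    p * q₁ * p * (p * q₂ * p) = 0 :=
  calc p * q₁ * p * (p * q₂ * p) = p * (q₁ * (p * p) * q₂) * p := by simp only [mul_assoc]
    _ = 0 := by rw [hp.eq, h, mul_zero, zero_mul]

theorem pertaining_projectors_mutually_orthogonal_general
    {n : ℕ} (P Q₁ Q₂ : Matrix (Fin n) (Fin n) ℝ)
    (hPidem : P * P = P)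
    (lam₁ lam₂ : ℝ)
    (horth : Q₁ * P * Q₂ = 0) :
    (lam₁⁻¹ • (P * Q₁ * P)) * (lam₂⁻¹ • (P * Q₂ * P)) = 0 := by
  rw [smul_mul_smul, IsIdempotentElem.compress_mul_compress_eq_zero hPidem horth, smul_zero]

/-- Pertaining projectors `P ▷ Q₁` and `P ▷ Q₂` project onto mutually orthogonal
subspaces of `Im P` when `Q₁ P Q₂ = 0`. -/
theorem pertaining_projectors_mutually_orthogonal
    {n : ℕ} (P Q₁ Q₂ : Matrix (Fin n) (Fin n) ℝ)
    (hPsym : Pᵀ = P) (hPidem : P * P = P)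
    (hQ₁sym : Q₁ᵀ = Q₁) (hQ₁idem : Q₁ * Q₁ = Q₁)
    (hQ₂sym : Q₂ᵀ = Q₂) (hQ₂idem : Q₂ * Q₂ = Q₂)
    (lam₁ lam₂ : ℝ) (hlam₁ : lam₁ ≠ 0) (hlam₂ : lam₂ ≠ 0)
    (horth : Q₁ * P * Q₂ = 0)
    (hbal₁ : Q₁ * P * Q₁ = lam₁ • Q₁) (hbal₂ : Q₂ * P * Q₂ = lam₂ • Q₂) :
    (lam₁⁻¹ • (P * Q₁ * P)) * (lam₂⁻¹ • (P * Q₂ * P)) = 0 :=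
  pertaining_projectors_mutually_orthogonal_general P Q₁ Q₂ hPidem lam₁ lam₂ horth
end

section
/- Let P be an n×n real symmetric idempotent matrix and let (Q_j)_{j∈J} be a finite mutually orthogonal family of n×n real symmetric idempotents that is structure balanced in relation to P with efficiency factors (λ_j)_{j∈J}. Define the residual P⊢𝒬 := P − Σ_{j : λ_j ≠ 0} λ_j⁻¹·P·Q_j·P. Then P⊢𝒬 is a symmetric idempotent and (P⊢𝒬)·Q_k = 0 for every k ∈ J; that is, the image of P⊢𝒬 is the part of Im P orthogonal to every Im Q_k. -/
open Matrix BigOperators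

/-!
Write `S = ∑_{λ_j ≠ 0} λ_j⁻¹ P Q_j P`. Balance gives `S Q_k = P Q_k` for `λ_k ≠ 0`, hence
`S (P Q_k P) = P Q_k P`, which makes `S` an idempotent with `P S = S P = S`, so `P - S` is
idempotent too. For `λ_k = 0`, `(P Q_k)ᵀ (P Q_k) = Q_k P Q_k = 0` forces `P Q_k = 0`, so
`P - S` kills every `Q_k`.
-/

def IsStructureBalanced {K A ι : Type*} [SMul K A] [Mul A] [Zero A]
    (P : A) (Q : ι → A) (lam : ι → K) : Prop :=
  (∀ j, Q j * P * Q j = lam j • Q j) ∧ ∀ j k, j ≠ k → Q j * P * Q k = 0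

section Algebra

variable {K A ι : Type*} [Field K] [Ring A] [Algebra K A]

def balancedProj (P : A) (Q : ι → A) (lam : ι → K) (s : Finset ι) : A :=
  ∑ j ∈ s, (lam j)⁻¹ • (P * Q j * P)

variable {P : A} {Q : ι → A} {lam : ι → K} {s : Finset ι}

theorem IsIdempotentElem.mul_balancedProj (hP : IsIdempotentElem P) :
    P * balancedProj P Q lam s = balancedProj P Q lam s := by
  simp only [balancedProj, Finset.mul_sum, mul_smul_comm, ← mul_assoc, hP.eq]

theorem IsIdempotentElem.balancedProj_mul (hP : IsIdempotentElem P) :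
    balancedProj P Q lam s * P = balancedProj P Q lam s := by
  simp only [balancedProj, Finset.sum_mul, smul_mul_assoc, mul_assoc, hP.eq]

theorem IsStructureBalanced.balancedProj_mul_of_mem (hQ : IsStructureBalanced P Q lam)
    {k : ι} (hk : k ∈ s) (hlam : lam k ≠ 0) :
    balancedProj P Q lam s * Q k = P * Q k := by
  classical
  have hterm : ∀ j ∈ s, (lam j)⁻¹ • (P * Q j * P) * Q k = if j = k then P * Q k else 0 := by
    intro j _
    rw [smul_mul_assoc, mul_assoc, mul_assoc, ← mul_assoc (Q j)]
    split_ifs with hjk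
    · rw [hjk, hQ.1, mul_smul_comm, smul_smul, inv_mul_cancel₀ hlam, one_smul]
    · rw [hQ.2 j k hjk, mul_zero, smul_zero]
  rw [balancedProj, Finset.sum_mul, Finset.sum_congr rfl hterm, Finset.sum_ite_eq' s k,
    if_pos hk]

theorem IsStructureBalanced.balancedProj_mul_of_notMem (hQ : IsStructureBalanced P Q lam)
    {k : ι} (hk : k ∉ s) :
    balancedProj P Q lam s * Q k = 0 := by
  refine (Finset.sum_mul ..).trans (Finset.sum_eq_zero fun j hj => ?_)
  rw [smul_mul_assoc, mul_assoc, mul_assoc, ← mul_assoc (Q j),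
    hQ.2 j k (ne_of_mem_of_not_mem hj hk), mul_zero, smul_zero]

theorem IsStructureBalanced.isIdempotentElem_balancedProj (hQ : IsStructureBalanced P Q lam)
    (hP : IsIdempotentElem P) (hs : ∀ j ∈ s, lam j ≠ 0) :
    IsIdempotentElem (balancedProj P Q lam s) := by
  set S := balancedProj P Q lam s
  have hSP : ∀ k ∈ s, S * (P * Q k * P) = P * Q k * P := fun k hk => by
    rw [← mul_assoc, ← mul_assoc, hP.balancedProj_mul, hQ.balancedProj_mul_of_mem hk (hs k hk)]
  calc S * S = ∑ k ∈ s, (lam k)⁻¹ • (S * (P * Q k * P)) := by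
        simp only [S, balancedProj, Finset.mul_sum, mul_smul_comm]
    _ = S := Finset.sum_congr rfl fun k hk => by rw [hSP k hk]

theorem IsStructureBalanced.isIdempotentElem_sub_balancedProj
    (hQ : IsStructureBalanced P Q lam) (hP : IsIdempotentElem P) (hs : ∀ j ∈ s, lam j ≠ 0) :
    IsIdempotentElem (P - balancedProj P Q lam s) :=
  (hQ.isIdempotentElem_balancedProj hP hs).sub hP hP.balancedProj_mul hP.mul_balancedProj

theorem isSelfAdjoint_balancedProj [StarRing A] [Star K] [TrivialStar K] [StarModule K A]
    (hP : IsSelfAdjoint P) (hQ : ∀ j, IsSelfAdjoint (Q j)) :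
    IsSelfAdjoint (balancedProj P Q lam s) :=
  isSelfAdjoint_sum s fun j _ => (IsSelfAdjoint.all _).smul ((hQ j).conjugate_self hP)

end Algebra

theorem Matrix.mul_eq_zero_of_conjTranspose_mul_mul_eq_zero {m n R : Type*} [Fintype m]
    [PartialOrder R] [Ring R] [StarRing R] [StarOrderedRing R] [NoZeroDivisors R]
    {P : Matrix m m R} {Q : Matrix m n R} (hPh : P.IsHermitian) (hP : IsIdempotentElem P)
    (h : Qᴴ * P * Q = 0) : P * Q = 0 := by
  rw [← conjTranspose_mul_self_eq_zero, conjTranspose_mul, hPh.eq, ← h, ← Matrix.mul_assoc,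
    Matrix.mul_assoc Qᴴ, hP.eq]

theorem Matrix.isSelfAdjoint_iff_transpose_eq {n R : Type*} [Star R] [TrivialStar R]
    {M : Matrix n n R} :
    IsSelfAdjoint M ↔ Mᵀ = M := by
  rw [isSelfAdjoint_iff, star_eq_conjTranspose, conjTranspose_eq_transpose_of_trivial]

open scoped Classical in
theorem residual_isSymmIdem_and_orthogonal_general
    {n : ℕ} {J : Type*} [Fintype J]
    (P : Matrix (Fin n) (Fin n) ℝ) (hPsym : Pᵀ = P) (hPidem : P * P = P)
    (Q : J → Matrix (Fin n) (Fin n) ℝ)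
    (hQsym : ∀ j, (Q j)ᵀ = Q j)
    (lam : J → ℝ)
    (hbal : ∀ j, Q j * P * Q j = lam j • Q j)
    (hadj : ∀ j k, j ≠ k → Q j * P * Q k = 0) :
    (P - ∑ j ∈ Finset.univ.filter (fun j => lam j ≠ 0),
        (lam j)⁻¹ • (P * Q j * P))ᵀ =
      P - ∑ j ∈ Finset.univ.filter (fun j => lam j ≠ 0),
        (lam j)⁻¹ • (P * Q j * P) ∧
    (P - ∑ j ∈ Finset.univ.filter (fun j => lam j ≠ 0),
        (lam j)⁻¹ • (P * Q j * P)) *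
      (P - ∑ j ∈ Finset.univ.filter (fun j => lam j ≠ 0),
        (lam j)⁻¹ • (P * Q j * P)) =
      P - ∑ j ∈ Finset.univ.filter (fun j => lam j ≠ 0),
        (lam j)⁻¹ • (P * Q j * P) ∧
    ∀ k, (P - ∑ j ∈ Finset.univ.filter (fun j => lam j ≠ 0),
        (lam j)⁻¹ • (P * Q j * P)) * Q k = 0 := by
  set s := Finset.univ.filter (fun j => lam j ≠ 0)
  have hs : ∀ j ∈ s, lam j ≠ 0 := fun j hj => (Finset.mem_filter.mp hj).2
  have hP : IsIdempotentElem P := hPidem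
  have hPsa : IsSelfAdjoint P := isSelfAdjoint_iff_transpose_eq.mpr hPsym
  have hQsa : ∀ j, IsSelfAdjoint (Q j) := fun j => isSelfAdjoint_iff_transpose_eq.mpr (hQsym j)
  have hQ : IsStructureBalanced P Q lam := ⟨hbal, hadj⟩
  refine ⟨isSelfAdjoint_iff_transpose_eq.mp (hPsa.sub (isSelfAdjoint_balancedProj hPsa hQsa)),
    (hQ.isIdempotentElem_sub_balancedProj hP hs).eq, fun k => ?_⟩
  change (P - balancedProj P Q lam s) * Q k = 0
  rw [sub_mul, sub_eq_zero]
  by_cases hk : lam k = 0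
  · rw [hQ.balancedProj_mul_of_notMem (by simp [s, hk])]
    refine mul_eq_zero_of_conjTranspose_mul_mul_eq_zero hPsa hP ?_
    rw [← star_eq_conjTranspose, hQsa k, hbal, hk, zero_smul]
  · exact (hQ.balancedProj_mul_of_mem (by simp [s, hk]) hk).symm

open scoped Classical in
/-- The residual `P ⊢ 𝒬 := P − Σ_{j : λ_j ≠ 0} λ_j⁻¹ P Q_j P` is a symmetric
idempotent and is orthogonal to every `Q_k`. -/
theorem residual_isSymmIdem_and_orthogonal
    {n : ℕ} {J : Type*} [Fintype J]
    (P : Matrix (Fin n) (Fin n) ℝ) (hPsym : Pᵀ = P) (hPidem : P * P = P)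
    (Q : J → Matrix (Fin n) (Fin n) ℝ)
    (hQsym : ∀ j, (Q j)ᵀ = Q j) (hQidem : ∀ j, Q j * Q j = Q j)
    (hQorth : ∀ j k, j ≠ k → Q j * Q k = 0)
    (lam : J → ℝ)
    (hbal : ∀ j, Q j * P * Q j = lam j • Q j)
    (hadj : ∀ j k, j ≠ k → Q j * P * Q k = 0) :
    (P - ∑ j ∈ Finset.univ.filter (fun j => lam j ≠ 0),
        (lam j)⁻¹ • (P * Q j * P))ᵀ =
      P - ∑ j ∈ Finset.univ.filter (fun j => lam j ≠ 0),
        (lam j)⁻¹ • (P * Q j * P) ∧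
    (P - ∑ j ∈ Finset.univ.filter (fun j => lam j ≠ 0),
        (lam j)⁻¹ • (P * Q j * P)) *
      (P - ∑ j ∈ Finset.univ.filter (fun j => lam j ≠ 0),
        (lam j)⁻¹ • (P * Q j * P)) =
      P - ∑ j ∈ Finset.univ.filter (fun j => lam j ≠ 0),
        (lam j)⁻¹ • (P * Q j * P) ∧
    ∀ k, (P - ∑ j ∈ Finset.univ.filter (fun j => lam j ≠ 0),
        (lam j)⁻¹ • (P * Q j * P)) * Q k = 0 :=
  residual_isSymmIdem_and_orthogonal_general P hPsym hPidem Q hQsym lam hbal hadj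
end

section
/- Let (P_i)_{i∈I} be a finite mutually orthogonal family of n×n real symmetric idempotents with Σ_{i∈I} P_i = I (the identity matrix), and let (Q_j)_{j∈J} be a finite mutually orthogonal family of n×n real symmetric idempotents that is structure balanced in relation to each P_i with efficiency factors (λ_{ij}). Then the collection consisting of all pertaining projectors P_i▷Q_j := λ_{ij}⁻¹·P_i·Q_j·P_i (over pairs (i,j) with λ_{ij} ≠ 0) together with all residuals P_i⊢𝒬 := P_i − Σ_{j : λ_{ij} ≠ 0} P_i▷Q_j (over i ∈ I) is a family of symmetric idempotents which are pairwise orthogonal (the product of any two distinct members is 0) and which sum to the identity matrix I. -/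
/-!
The balance conditions give `(P Q_j P) (P Q_k P) = P (Q_j P Q_k) P = δ_{jk} λ_j P Q_j P`, so the
rescaled products `λ_j⁻¹ P Q_j P` with `λ_j ≠ 0` are orthogonal idempotents in the corner ring of
`P`. In that corner ring, whose unit is `P`, the residual `P - ∑_j λ_j⁻¹ P Q_j P` completes them to
a family of orthogonal idempotents summing to `P`. Refining the complete family `(P_i)` by these
families again gives a complete orthogonal family, because members of the corners of distinct
`P_i` multiply through `P_i P_{i'} = 0`. Symmetry is inherited termwise.
-/

open Matrix

section Idempotents

variable {R : Type*}

section Semiring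

variable [Semiring R]

theorem OrthogonalIdempotents.sum_mul_of_mem {K : Type*} {f : K → R}
    (hf : OrthogonalIdempotents f) {k : K} {s : Finset K} (h : k ∈ s) :
    (∑ l ∈ s, f l) * f k = f k := by
  classical
  simp [Finset.sum_mul, hf.mul_eq, h]

theorem CompleteOrthogonalIdempotents.sigma {I : Type*} [Fintype I] {K : I → Type*}
    [∀ i, Fintype (K i)] {p : I → R} {f : ∀ i, K i → R} (hp : CompleteOrthogonalIdempotents p)
    (hf : ∀ i, OrthogonalIdempotents (f i)) (hsum : ∀ i, ∑ k, f i k = p i) :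
    CompleteOrthogonalIdempotents fun x : Σ i, K i => f x.1 x.2 where
  idem x := (hf x.1).idem x.2
  ortho := by
    rintro ⟨i, k⟩ ⟨i', l⟩ hne
    by_cases hi : i = i'
    · subst hi
      exact (hf i).ortho fun h => hne (congrArg _ h)
    · calc f i k * f i' l = f i k * p i * (p i' * f i' l) := by
            rw [← hsum, ← hsum, (hf i).mul_sum_of_mem (Finset.mem_univ _),
              (hf i').sum_mul_of_mem (Finset.mem_univ _)]
        _ = f i k * (p i * p i') * f i' l := by simp only [mul_assoc]
        _ = 0 := by rw [hp.ortho hi, mul_zero, zero_mul]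
  complete := by rw [Fintype.sum_sigma]; simp only [hsum, hp.complete]

end Semiring

theorem OrthogonalIdempotents.option_sub_sum [Ring R] {K : Type*} [Fintype K] {p : R}
    {f : K → R} (hf : OrthogonalIdempotents f) (hp : IsIdempotentElem p)
    (hpf : ∀ k, p * f k = f k) (hfp : ∀ k, f k * p = f k) :
    OrthogonalIdempotents (Option.elim · (p - ∑ k, f k) f) := by
  have hps : p * ∑ k, f k = ∑ k, f k := by simp only [Finset.mul_sum, hpf]
  have hsp : (∑ k, f k) * p = ∑ k, f k := by simp only [Finset.sum_mul, hfp]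
  have hss : (∑ k, f k) * ∑ k, f k = ∑ k, f k := hf.isIdempotentElem_sum
  refine hf.option _ ?_ ?_ ?_
  · rw [IsIdempotentElem, sub_mul, mul_sub, mul_sub, hp.eq, hps, hsp, hss, sub_self, sub_zero]
  · rw [sub_mul, hps, hss, sub_self]
  · rw [mul_sub, hsp, hss, sub_self]

theorem sum_option_elim_sub_sum [AddCommGroup R] {K : Type*} [Fintype K] (p : R) (f : K → R) :
    ∑ o : Option K, Option.elim o (p - ∑ k, f k) f = p := by
  simp [Fintype.sum_option]

section Corner

variable {𝕜 : Type*} [Semifield 𝕜] [Semiring R] [Algebra 𝕜 R] {p q : R}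

theorem IsIdempotentElem.mul_smul_corner (hp : IsIdempotentElem p) (c : 𝕜) :
    p * (c • (p * q * p)) = c • (p * q * p) := by
  rw [mul_smul_comm, ← mul_assoc, ← mul_assoc, hp.eq]

theorem IsIdempotentElem.smul_corner_mul (hp : IsIdempotentElem p) (c : 𝕜) :
    c • (p * q * p) * p = c • (p * q * p) := by
  rw [smul_mul_assoc, mul_assoc, hp.eq]

theorem IsIdempotentElem.corner_mul_corner (hp : IsIdempotentElem p) (q' : R) :
    p * q * p * (p * q' * p) = p * (q * p * q') * p := by
  simp only [← mul_assoc]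
  rw [mul_assoc _ p p, hp.eq]

theorem orthogonalIdempotents_inv_smul_corner {ι : Type*} {q : ι → R} {c : ι → 𝕜}
    (hp : IsIdempotentElem p) (hbal : ∀ j, q j * p * q j = c j • q j)
    (hadj : Pairwise fun j k => q j * p * q k = 0) :
    OrthogonalIdempotents fun j : {j // c j ≠ 0} => (c j)⁻¹ • (p * q j * p) where
  idem j := by
    rw [IsIdempotentElem, smul_mul_smul_comm, hp.corner_mul_corner, hbal, mul_smul_comm,
      smul_mul_assoc, smul_smul, mul_assoc, inv_mul_cancel₀ j.2, mul_one]
  ortho j k hjk := by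
    dsimp only
    rw [smul_mul_smul_comm, hp.corner_mul_corner, hadj (Subtype.coe_ne_coe.mpr hjk),
      mul_zero, zero_mul, smul_zero]

end Corner

end Idempotents

theorem Matrix.isSymm_sum {n α ι : Type*} [AddCommMonoid α] (s : Finset ι)
    {A : ι → Matrix n n α} (hA : ∀ i ∈ s, (A i).IsSymm) : (∑ i ∈ s, A i).IsSymm := by
  rw [IsSymm, transpose_sum]
  exact Finset.sum_congr rfl hA

def Equiv.sigmaOptionSubtypeEquiv {α β : Type*} (r : α → β → Prop) :
    (Σ a, Option {b // r a b}) ≃ {c : α × β // r c.1 c.2} ⊕ α where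
  toFun
    | ⟨a, none⟩ => Sum.inr a
    | ⟨a, some b⟩ => Sum.inl ⟨(a, b), b.2⟩
  invFun
    | Sum.inl c => ⟨c.1.1, some ⟨c.1.2, c.2⟩⟩
    | Sum.inr a => ⟨a, none⟩
  left_inv := by rintro ⟨a, _ | b⟩ <;> rfl
  right_inv := by rintro (c | a) <;> rfl

open scoped Classical in
theorem combined_decomposition_is_orthogonal_decomposition_general
    {n : ℕ} {I J : Type*} [Fintype I] [Fintype J]
    (P : I → Matrix (Fin n) (Fin n) ℝ)
    (hPsym : ∀ i, (P i)ᵀ = P i) (hPidem : ∀ i, P i * P i = P i)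
    (hPorth : ∀ i i', i ≠ i' → P i * P i' = 0)
    (hPsum : ∑ i, P i = 1)
    (Q : J → Matrix (Fin n) (Fin n) ℝ)
    (hQsym : ∀ j, (Q j)ᵀ = Q j)
    (lam : I → J → ℝ)
    (hbal : ∀ i j, Q j * P i * Q j = lam i j • Q j)
    (hadj : ∀ i j k, j ≠ k → Q j * P i * Q k = 0)
    (D : {p : I × J // lam p.1 p.2 ≠ 0} ⊕ I → Matrix (Fin n) (Fin n) ℝ)
    (hDpert : ∀ p : {p : I × J // lam p.1 p.2 ≠ 0},
      D (Sum.inl p) = (lam p.1.1 p.1.2)⁻¹ • (P p.1.1 * Q p.1.2 * P p.1.1))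
    (hDres : ∀ i, D (Sum.inr i) =
      P i - ∑ j ∈ Finset.univ.filter (fun j => lam i j ≠ 0),
        (lam i j)⁻¹ • (P i * Q j * P i)) :
    (∀ x, (D x)ᵀ = D x ∧ D x * D x = D x) ∧
      (∀ x y, x ≠ y → D x * D y = 0) ∧
      ∑ x, D x = 1 := by
  set E : ∀ i, {j // lam i j ≠ 0} → Matrix (Fin n) (Fin n) ℝ :=
    fun i j => (lam i j)⁻¹ • (P i * Q j * P i)
  have hE (i : I) : OrthogonalIdempotents (E i) :=
    orthogonalIdempotents_inv_smul_corner (hPidem i) (hbal i) fun j k => hadj i j k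
  have hDres' (i : I) : D (Sum.inr i) = P i - ∑ j, E i j := by
    rw [hDres, Finset.sum_subtype _ (p := fun j => lam i j ≠ 0) (by simp)]
  let e := Equiv.sigmaOptionSubtypeEquiv fun i j => lam i j ≠ 0
  have hDe : D ∘ e = fun x => Option.elim x.2 (P x.1 - ∑ j, E x.1 j) (E x.1) := by
    funext x
    rcases x with ⟨i, _ | j⟩
    · exact hDres' i
    · exact hDpert _
  have hD : CompleteOrthogonalIdempotents D := by
    rw [← CompleteOrthogonalIdempotents.equiv e, hDe]
    exact CompleteOrthogonalIdempotents.sigma ⟨⟨hPidem, fun i i' => hPorth i i'⟩, hPsum⟩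
      (fun i => (hE i).option_sub_sum (hPidem i)
        (fun _ => IsIdempotentElem.mul_smul_corner (hPidem i) _)
        fun _ => IsIdempotentElem.smul_corner_mul (hPidem i) _)
      fun i => sum_option_elim_sub_sum _ _
  have hEsymm (i : I) (j : {j // lam i j ≠ 0}) : (E i j).IsSymm :=
    (IsSymm.mul_mul_self (hPsym i) (hQsym j)).smul _
  have hDsymm : ∀ x, (D x).IsSymm := by
    rintro (p | i)
    · rw [hDpert]
      exact hEsymm p.1.1 ⟨p.1.2, p.2⟩
    · rw [hDres']
      exact IsSymm.sub (hPsym i) (isSymm_sum _ fun j _ => hEsymm i j)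
  exact ⟨fun x => ⟨hDsymm x, (hD.idem x).eq⟩, fun _ _ h => hD.ortho h, hD.complete⟩

open scoped Classical in
/-- Definition 4 / combined decomposition `𝒫 ▷ 𝒬`: the pertaining projectors
`P_i ▷ Q_j = λ_{ij}⁻¹ P_i Q_j P_i` (over pairs with `λ_{ij} ≠ 0`) together with
the residuals `P_i ⊢ 𝒬` form a family of pairwise orthogonal symmetric
idempotents summing to the identity. -/
theorem combined_decomposition_is_orthogonal_decomposition
    {n : ℕ} {I J : Type*} [Fintype I] [Fintype J]
    (P : I → Matrix (Fin n) (Fin n) ℝ)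
    (hPsym : ∀ i, (P i)ᵀ = P i) (hPidem : ∀ i, P i * P i = P i)
    (hPorth : ∀ i i', i ≠ i' → P i * P i' = 0)
    (hPsum : ∑ i, P i = 1)
    (Q : J → Matrix (Fin n) (Fin n) ℝ)
    (hQsym : ∀ j, (Q j)ᵀ = Q j) (hQidem : ∀ j, Q j * Q j = Q j)
    (hQorth : ∀ j k, j ≠ k → Q j * Q k = 0)
    (lam : I → J → ℝ)
    (hbal : ∀ i j, Q j * P i * Q j = lam i j • Q j)
    (hadj : ∀ i j k, j ≠ k → Q j * P i * Q k = 0)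
    (D : {p : I × J // lam p.1 p.2 ≠ 0} ⊕ I → Matrix (Fin n) (Fin n) ℝ)
    (hDpert : ∀ p : {p : I × J // lam p.1 p.2 ≠ 0},
      D (Sum.inl p) = (lam p.1.1 p.1.2)⁻¹ • (P p.1.1 * Q p.1.2 * P p.1.1))
    (hDres : ∀ i, D (Sum.inr i) =
      P i - ∑ j ∈ Finset.univ.filter (fun j => lam i j ≠ 0),
        (lam i j)⁻¹ • (P i * Q j * P i)) :
    (∀ x, (D x)ᵀ = D x ∧ D x * D x = D x) ∧
      (∀ x y, x ≠ y → D x * D y = 0) ∧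
      ∑ x, D x = 1 :=
  combined_decomposition_is_orthogonal_decomposition_general P hPsym hPidem hPorth hPsum Q hQsym lam
    hbal hadj D hDpert hDres
end

section
/- Let (P_i)_{i∈I} and (Q_j)_{j∈J} be finite mutually orthogonal families of n×n real symmetric idempotents with Σ_{i∈I} P_i = I and Σ_{j∈J} Q_j = I (the identity matrix), such that (Q_j) is structure balanced in relation to each P_i with efficiency factors (λ_{ij}). Then for each i ∈ I, P_i = Σ_{j : λ_{ij} ≠ 0} Q_j; that is, the family (Q_j) is a refinement of (P_i): each subspace Im P_i is the direct sum of those subspaces Im Q_j with λ_{ij} ≠ 0. -/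
/-!
Sandwiching `P i` between two copies of `∑ j, Q j = 1` and using the balance conditions gives
`P i = ∑ j, λ i j • Q j`. Then `P i * Q j = λ i j • Q j`, and idempotence of `P i` yields
`λ i j • Q j = λ i j ^ 2 • Q j`, so `λ i j • Q j = Q j` as soon as `λ i j ≠ 0`.
-/

open Matrix

section Balanced

variable {𝕜 A J : Type*} [Fintype J]

theorem eq_sum_smul_of_balanced [Semiring A] [SMul 𝕜 A] {Q : J → A} (hQsum : ∑ j, Q j = 1)
    {p : A} {c : J → 𝕜} (hbal : ∀ j, Q j * p * Q j = c j • Q j)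
    (hadj : ∀ j k, j ≠ k → Q j * p * Q k = 0) :
    p = ∑ j, c j • Q j := by
  calc p = (∑ j, Q j) * p * ∑ k, Q k := by rw [hQsum, one_mul, mul_one]
    _ = ∑ j, ∑ k, Q j * p * Q k := by
      simp only [Finset.sum_mul, Finset.mul_sum]
      exact Finset.sum_comm
    _ = ∑ j, c j • Q j := by
      refine Finset.sum_congr rfl fun j _ => ?_
      rw [Finset.sum_eq_single j (fun k _ hk => hadj j k hk.symm) (by simp), hbal]

variable [Field 𝕜] [Ring A] [Algebra 𝕜 A]

theorem sum_smul_mul_eq_smul {Q : J → A} (hQidem : ∀ j, IsIdempotentElem (Q j))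
    (hQorth : ∀ j k, j ≠ k → Q j * Q k = 0) (c : J → 𝕜) (j : J) :
    (∑ k, c k • Q k) * Q j = c j • Q j := by
  rw [Finset.sum_mul, Finset.sum_eq_single j
    (fun k _ hk => by rw [smul_mul_assoc, hQorth k j hk, smul_zero]) (by simp),
    smul_mul_assoc, (hQidem j).eq]

theorem smul_eq_self_of_mul_eq_smul {p q : A} (hp : IsIdempotentElem p) {c : 𝕜}
    (hpq : p * q = c • q) (hc : c ≠ 0) : c • q = q := by
  refine smul_right_injective A hc ?_
  calc c • c • q = p * (p * q) := by rw [hpq, mul_smul_comm, hpq]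
    _ = c • q := by rw [← mul_assoc, hp.eq, hpq]

open scoped Classical in
theorem eq_sum_filter_of_eq_sum_smul {Q : J → A} (hQidem : ∀ j, IsIdempotentElem (Q j))
    (hQorth : ∀ j k, j ≠ k → Q j * Q k = 0) {p : A} (hp : IsIdempotentElem p) {c : J → 𝕜}
    (hpQ : p = ∑ j, c j • Q j) :
    p = ∑ j ∈ Finset.univ.filter (fun j => c j ≠ 0), Q j := by
  have hmul : ∀ j, p * Q j = c j • Q j := fun j => hpQ ▸ sum_smul_mul_eq_smul hQidem hQorth c j
  rw [Finset.sum_filter, hpQ]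
  refine Finset.sum_congr rfl fun j _ => ?_
  split_ifs with hc
  · exact smul_eq_self_of_mul_eq_smul hp (hmul j) hc
  · rw [not_not.mp hc, zero_smul]

end Balanced

open scoped Classical in
theorem refinement_of_both_sum_to_identity_general
    {n : ℕ} {I J : Type*} [Fintype J]
    (P : I → Matrix (Fin n) (Fin n) ℝ)
    (hPidem : ∀ i, P i * P i = P i)
    (Q : J → Matrix (Fin n) (Fin n) ℝ)
    (hQidem : ∀ j, Q j * Q j = Q j)
    (hQorth : ∀ j k, j ≠ k → Q j * Q k = 0)
    (hQsum : ∑ j, Q j = 1)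
    (lam : I → J → ℝ)
    (hbal : ∀ i j, Q j * P i * Q j = lam i j • Q j)
    (hadj : ∀ i j k, j ≠ k → Q j * P i * Q k = 0) :
    ∀ i, P i = ∑ j ∈ Finset.univ.filter (fun j => lam i j ≠ 0), Q j := fun i =>
  eq_sum_filter_of_eq_sum_smul hQidem hQorth (hPidem i)
    (eq_sum_smul_of_balanced hQsum (hbal i) (hadj i))

open scoped Classical in
/-- Lemma 4.2 (refinement): if both structures decompose the whole space, then
each `P_i` is the sum of those `Q_j` with `λ_{ij} ≠ 0`, i.e. the family `(Q_j)`
refines the family `(P_i)`. -/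
theorem refinement_of_both_sum_to_identity
    {n : ℕ} {I J : Type*} [Fintype I] [Fintype J]
    (P : I → Matrix (Fin n) (Fin n) ℝ)
    (hPsym : ∀ i, (P i)ᵀ = P i) (hPidem : ∀ i, P i * P i = P i)
    (hPorth : ∀ i i', i ≠ i' → P i * P i' = 0)
    (hPsum : ∑ i, P i = 1)
    (Q : J → Matrix (Fin n) (Fin n) ℝ)
    (hQsym : ∀ j, (Q j)ᵀ = Q j) (hQidem : ∀ j, Q j * Q j = Q j)
    (hQorth : ∀ j k, j ≠ k → Q j * Q k = 0)
    (hQsum : ∑ j, Q j = 1)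
    (lam : I → J → ℝ)
    (hbal : ∀ i j, Q j * P i * Q j = lam i j • Q j)
    (hadj : ∀ i j k, j ≠ k → Q j * P i * Q k = 0) :
    ∀ i, P i = ∑ j ∈ Finset.univ.filter (fun j => lam i j ≠ 0), Q j :=
  refinement_of_both_sum_to_identity_general P hPidem Q hQidem hQorth hQsum lam hbal hadj
end

section
/- Let P be an n×n real symmetric idempotent matrix; let (Q_j)_{j∈J} be a finite mutually orthogonal family of n×n real symmetric idempotents with I_Q := Σ_{j∈J} Q_j, structure balanced in relation to P with efficiency factors (λ_j)_{j∈J}; and let (R_m)_{m∈M} be a finite mutually orthogonal family of n×n real symmetric idempotents with R_m·I_Q = R_m for all m, such that (R_m) is structure balanced in relation to each Q_j with efficiency factors (μ_{jm}), i.e. R_m·Q_j·R_m = μ_{jm}·R_m for all j, m and R_m·Q_j·R_n = 0 whenever m ≠ n. Then (R_m) is structure balanced in relation to P with efficiency factors given by the matrix product: R_m·P·R_m = (Σ_{j∈J} λ_j·μ_{jm})·R_m for all m ∈ M, and R_m·P·R_n = 0 whenever m ≠ n. -/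
open Matrix BigOperators

/-! Since `R m` lies under `I_Q = ∑ j, Q j` on both sides, `R m * P * R m'` equals
`R m * (I_Q * P * I_Q) * R m'`, and balance of `(Q j)` in relation to `P` says exactly that
`I_Q * P * I_Q = ∑ j, λ j • Q j`. Sandwiching this between `R m` and `R m'` and using the
balance of `(R m)` in relation to each `Q j` gives the product of the efficiency matrices. -/

theorem sum_mul_mul_sum_eq_sum_smul_of_balanced {K A J : Type*} [CommSemiring K]
    [Semiring A] [Algebra K A] [Fintype J] [DecidableEq J] (P : A) (Q : J → A) (lam : J → K)
    (hbal : ∀ j, Q j * P * Q j = lam j • Q j) (hadj : ∀ j k, j ≠ k → Q j * P * Q k = 0) :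
    (∑ j, Q j) * P * (∑ j, Q j) = ∑ j, lam j • Q j := by
  have hQPQ : ∀ j k, Q j * P * Q k = if j = k then lam j • Q j else 0 := by
    intro j k
    split_ifs with hjk
    · subst hjk; exact hbal j
    · exact hadj j k hjk
  simp only [Finset.sum_mul, Finset.mul_sum, hQPQ, Finset.sum_ite_eq', Finset.mem_univ, if_true]

theorem mul_mul_eq_sum_smul_of_balanced {K A J : Type*} [CommSemiring K]
    [Semiring A] [Algebra K A] [Fintype J] (P : A) (Q : J → A) (lam : J → K)
    (hbal : ∀ j, Q j * P * Q j = lam j • Q j) (hadj : ∀ j k, j ≠ k → Q j * P * Q k = 0)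
    {x y : A} (hx : x * (∑ j, Q j) = x) (hy : (∑ j, Q j) * y = y) :
    x * P * y = ∑ j, lam j • (x * Q j * y) := by
  classical
  calc x * P * y = x * ((∑ j, Q j) * P * (∑ j, Q j)) * y := by
        rw [← mul_assoc, ← mul_assoc, hx, mul_assoc (x * P), hy]
    _ = ∑ j, lam j • (x * Q j * y) := by
        rw [sum_mul_mul_sum_eq_sum_smul_of_balanced P Q lam hbal hadj, Finset.mul_sum,
          Finset.sum_mul]
        simp only [mul_smul_comm, smul_mul_assoc]

theorem Matrix.mul_eq_right_of_mul_eq_left {m α : Type*} [Fintype m] [CommSemiring α]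
    {A B : Matrix m m α} (hA : Aᵀ = A) (hB : Bᵀ = B) (h : A * B = A) : B * A = A := by
  simpa only [transpose_mul, hA, hB] using congrArg transpose h

theorem composite_structure_balance_general
    {n : ℕ} {J M : Type*} [Fintype J] [Fintype M]
    (P : Matrix (Fin n) (Fin n) ℝ)
    (Q : J → Matrix (Fin n) (Fin n) ℝ)
    (hQsym : ∀ j, (Q j)ᵀ = Q j)
    (lam : J → ℝ)
    (hbalQ : ∀ j, Q j * P * Q j = lam j • Q j)
    (hadjQ : ∀ j k, j ≠ k → Q j * P * Q k = 0)
    (R : M → Matrix (Fin n) (Fin n) ℝ)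
    (hRsym : ∀ m, (R m)ᵀ = R m)
    (hRsub : ∀ m, R m * (∑ j, Q j) = R m)
    (mu : J → M → ℝ)
    (hbalR : ∀ j m, R m * Q j * R m = mu j m • R m)
    (hadjR : ∀ j m m', m ≠ m' → R m * Q j * R m' = 0) :
    (∀ m, R m * P * R m = (∑ j, lam j * mu j m) • R m) ∧
      (∀ m m', m ≠ m' → R m * P * R m' = 0) := by
  have hsumQ : (∑ j, Q j)ᵀ = ∑ j, Q j := by simp only [transpose_sum, hQsym]
  have hRPR : ∀ m m', R m * P * R m' = ∑ j, lam j • (R m * Q j * R m') := fun m m' =>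
    mul_mul_eq_sum_smul_of_balanced P Q lam hbalQ hadjQ (hRsub m)
      (mul_eq_right_of_mul_eq_left (hRsym m') hsumQ (hRsub m'))
  refine ⟨fun m => ?_, fun m m' hmm' => ?_⟩
  · simp only [hRPR, hbalR, smul_smul, Finset.sum_smul]
  · simp only [hRPR, hadjR _ _ _ hmm', smul_zero, Finset.sum_const_zero]

/-- Theorem 5.1(a): for a chain of randomizations, `(R_m)` is structure balanced
in relation to `P` with efficiency matrix `Λ_{PR} = Λ_{PQ} Λ_{QR}`. -/
theorem composite_structure_balance
    {n : ℕ} {J M : Type*} [Fintype J] [Fintype M]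
    (P : Matrix (Fin n) (Fin n) ℝ) (hPsym : Pᵀ = P) (hPidem : P * P = P)
    (Q : J → Matrix (Fin n) (Fin n) ℝ)
    (hQsym : ∀ j, (Q j)ᵀ = Q j) (hQidem : ∀ j, Q j * Q j = Q j)
    (hQorth : ∀ j k, j ≠ k → Q j * Q k = 0)
    (lam : J → ℝ)
    (hbalQ : ∀ j, Q j * P * Q j = lam j • Q j)
    (hadjQ : ∀ j k, j ≠ k → Q j * P * Q k = 0)
    (R : M → Matrix (Fin n) (Fin n) ℝ)
    (hRsym : ∀ m, (R m)ᵀ = R m) (hRidem : ∀ m, R m * R m = R m)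
    (hRorth : ∀ m m', m ≠ m' → R m * R m' = 0)
    (hRsub : ∀ m, R m * (∑ j, Q j) = R m)
    (mu : J → M → ℝ)
    (hbalR : ∀ j m, R m * Q j * R m = mu j m • R m)
    (hadjR : ∀ j m m', m ≠ m' → R m * Q j * R m' = 0) :
    (∀ m, R m * P * R m = (∑ j, lam j * mu j m) • R m) ∧
      (∀ m m', m ≠ m' → R m * P * R m' = 0) :=
  composite_structure_balance_general P Q hQsym lam hbalQ hadjQ R hRsym hRsub mu hbalR hadjR
end

section
/- Let P be an n×n real symmetric idempotent matrix; let (Q_j)_{j∈J} be a finite mutually orthogonal family of n×n real symmetric idempotents with I_Q := Σ_{j∈J} Q_j, structure balanced in relation to P with efficiency factors (λ_j)_{j∈J}; fix k ∈ J with λ_k ≠ 0 and set P▷Q_k := λ_k⁻¹·P·Q_k·P. Let R be an n×n real symmetric idempotent with R·I_Q = R and R·Q_k·R = μ·R for some real μ. Then R·(P▷Q_k)·R = λ_k·μ·R. -/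
/-!
Write `S = ∑ j, Q j`. Structure balance collapses the sum on either side of `P * Q k`:
`S * P * Q k = λ_k • Q k = Q k * P * S`. Since `R` lies under `S` (`R * S = R = S * R`, the second
by symmetry), `R * (P * Q k * P) * R = R * S * P * Q k * P * S * R = λ_k² • (R * Q k * R)`.
-/

open Matrix BigOperators

section Balanced

variable {𝕜 A J : Type*} [CommSemiring 𝕜] [Semiring A] [Algebra 𝕜 A] [Fintype J]
  {P : A} {Q : J → A} {lam : J → 𝕜}

theorem sum_mul_mul_eq_smul_of_balanced (hbal : ∀ j, Q j * P * Q j = lam j • Q j)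
    (hadj : ∀ j k, j ≠ k → Q j * P * Q k = 0) (k : J) :
    (∑ j, Q j) * P * Q k = lam k • Q k := by
  rw [Finset.sum_mul, Finset.sum_mul, Finset.sum_eq_single k (fun j _ hj ↦ hadj j k hj)
    (fun hk ↦ absurd (Finset.mem_univ k) hk), hbal]

theorem mul_mul_sum_eq_smul_of_balanced (hbal : ∀ j, Q j * P * Q j = lam j • Q j)
    (hadj : ∀ j k, j ≠ k → Q j * P * Q k = 0) (k : J) :
    Q k * P * (∑ j, Q j) = lam k • Q k := by
  rw [Finset.mul_sum, Finset.sum_eq_single k (fun j _ hj ↦ hadj k j hj.symm)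
    (fun hk ↦ absurd (Finset.mem_univ k) hk), hbal]

end Balanced

theorem mul_mul_mul_mul_eq_smul_of_sandwich {𝕜 A : Type*} [CommSemiring 𝕜] [Semiring A]
    [Algebra 𝕜 A] {P Q R S : A} {l : 𝕜} (hRS : R * S = R) (hSR : S * R = R)
    (hleft : S * P * Q = l • Q) (hright : Q * P * S = l • Q) :
    R * (P * Q * P) * R = (l * l) • (R * Q * R) := by
  calc R * (P * Q * P) * R = R * S * (P * Q * P) * (S * R) := by rw [hRS, hSR]
    _ = R * (S * P * Q) * (P * S) * R := by simp only [mul_assoc]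
    _ = l • (R * (Q * P * S) * R) := by
        simp only [hleft, mul_smul_comm, smul_mul_assoc, mul_assoc]
    _ = (l * l) • (R * Q * R) := by
        rw [hright, mul_smul_comm, smul_mul_assoc, smul_smul]

theorem Matrix.mul_eq_self_of_mul_eq_self_of_transpose_eq {m α : Type*} [Fintype m]
    [CommSemiring α] {R S : Matrix m m α} (hR : Rᵀ = R) (hS : Sᵀ = S) (h : R * S = R) :
    S * R = R := by
  simpa only [transpose_mul, hR, hS] using congrArg transpose h

theorem first_order_balance_wrt_pertaining_projector_general
    {n : ℕ} {J : Type*} [Fintype J]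
    (P : Matrix (Fin n) (Fin n) ℝ)
    (Q : J → Matrix (Fin n) (Fin n) ℝ)
    (hQsym : ∀ j, (Q j)ᵀ = Q j)
    (lam : J → ℝ)
    (hbalQ : ∀ j, Q j * P * Q j = lam j • Q j)
    (hadjQ : ∀ j k, j ≠ k → Q j * P * Q k = 0)
    (k : J) (hk : lam k ≠ 0)
    (R : Matrix (Fin n) (Fin n) ℝ) (hRsym : Rᵀ = R)
    (hRsub : R * (∑ j, Q j) = R)
    (mu : ℝ) (hbalR : R * Q k * R = mu • R) :
    R * ((lam k)⁻¹ • (P * Q k * P)) * R = (lam k * mu) • R := by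
  have hsum_sym : (∑ j, Q j)ᵀ = ∑ j, Q j := by simp only [transpose_sum, hQsym]
  have hsandwich := mul_mul_mul_mul_eq_smul_of_sandwich hRsub
    (mul_eq_self_of_mul_eq_self_of_transpose_eq hRsym hsum_sym hRsub)
    (sum_mul_mul_eq_smul_of_balanced hbalQ hadjQ k) (mul_mul_sum_eq_smul_of_balanced hbalQ hadjQ k)
  rw [mul_smul_comm, smul_mul_assoc, hsandwich, hbalR, smul_smul, smul_smul]
  congr 1
  field_simp

/-- Condition (i) of Theorem 5.1(b): `R` is first-order balanced in relation to
the pertaining projector `P ▷ Q_k = λ_k⁻¹ P Q_k P` with efficiency factor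
`λ_k μ`. -/
theorem first_order_balance_wrt_pertaining_projector
    {n : ℕ} {J : Type*} [Fintype J]
    (P : Matrix (Fin n) (Fin n) ℝ) (hPsym : Pᵀ = P) (hPidem : P * P = P)
    (Q : J → Matrix (Fin n) (Fin n) ℝ)
    (hQsym : ∀ j, (Q j)ᵀ = Q j) (hQidem : ∀ j, Q j * Q j = Q j)
    (hQorth : ∀ j k, j ≠ k → Q j * Q k = 0)
    (lam : J → ℝ)
    (hbalQ : ∀ j, Q j * P * Q j = lam j • Q j)
    (hadjQ : ∀ j k, j ≠ k → Q j * P * Q k = 0)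
    (k : J) (hk : lam k ≠ 0)
    (R : Matrix (Fin n) (Fin n) ℝ) (hRsym : Rᵀ = R) (hRidem : R * R = R)
    (hRsub : R * (∑ j, Q j) = R)
    (mu : ℝ) (hbalR : R * Q k * R = mu • R) :
    R * ((lam k)⁻¹ • (P * Q k * P)) * R = (lam k * mu) • R :=
  first_order_balance_wrt_pertaining_projector_general P Q hQsym lam hbalQ hadjQ k hk R hRsym hRsub
    mu hbalR
end

section
/- Let P be an n×n real symmetric idempotent matrix and let (Q_j)_{j∈J} be a finite mutually orthogonal family of n×n real symmetric idempotents, structure balanced in relation to P with efficiency factors (λ_j)_{j∈J}. Let M₁ and M₂ be n×n real symmetric idempotent matrices and j₁, j₂ ∈ J such that Q_{j₁}·M₁ = M₁ = M₁·Q_{j₁} and Q_{j₂}·M₂ = M₂ = M₂·Q_{j₂}. Then M₁·P·M₂ = 0 if j₁ ≠ j₂, and M₁·P·M₂ = λ_{j₁}·M₁·M₂ if j₁ = j₂; in particular, M₁·P·M₁ = λ_{j₁}·M₁. -/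
/-! Every member of a refinement is absorbed by its parent, `M = M Q = Q M`, so
`M₁ P M₂ = M₁ (Q_{j₁} P Q_{j₂}) M₂`, and the balance relations of the parents evaluate the
middle factor. -/

section Compression

variable {A : Type*} [Semiring A]

theorem mul_mul_eq_mul_compress_mul {a b x y : A} (p : A) (ha : a * x = a) (hb : y * b = b) :
    a * p * b = a * (x * p * y) * b := by
  rw [show a * (x * p * y) * b = a * x * p * (y * b) by simp only [mul_assoc], ha, hb]

theorem mul_mul_eq_zero_of_compress_eq_zero {a b x y p : A} (ha : a * x = a) (hb : y * b = b)
    (hxy : x * p * y = 0) : a * p * b = 0 := by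
  rw [mul_mul_eq_mul_compress_mul p ha hb, hxy, mul_zero, zero_mul]

theorem mul_mul_eq_smul_mul_of_compress_eq_smul {S : Type*} [SMul S A] [IsScalarTower S A A]
    [SMulCommClass S A A] {a b x p : A} {c : S} (ha : a * x = a) (hb : x * b = b)
    (hx : x * p * x = c • x) : a * p * b = c • (a * b) := by
  rw [mul_mul_eq_mul_compress_mul p ha hb, hx, mul_smul_comm, smul_mul_assoc, ha]

end Compression

open Matrix BigOperators

theorem refinement_structure_balance_general
    {n : ℕ} {J : Type*}
    (P : Matrix (Fin n) (Fin n) ℝ)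
    (Q : J → Matrix (Fin n) (Fin n) ℝ)
    (lam : J → ℝ)
    (hbalQ : ∀ j, Q j * P * Q j = lam j • Q j)
    (hadjQ : ∀ j k, j ≠ k → Q j * P * Q k = 0)
    (M₁ M₂ : Matrix (Fin n) (Fin n) ℝ)
    (hM₁idem : M₁ * M₁ = M₁)
    (j₁ j₂ : J)
    (hM₁l : Q j₁ * M₁ = M₁) (hM₁r : M₁ * Q j₁ = M₁)
    (hM₂l : Q j₂ * M₂ = M₂) :
    (j₁ ≠ j₂ → M₁ * P * M₂ = 0) ∧
      (j₁ = j₂ → M₁ * P * M₂ = lam j₁ • (M₁ * M₂)) ∧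
      M₁ * P * M₁ = lam j₁ • M₁ := by
  refine ⟨fun hne => mul_mul_eq_zero_of_compress_eq_zero hM₁r hM₂l (hadjQ j₁ j₂ hne),
    fun heq => ?_, ?_⟩
  · subst heq
    exact mul_mul_eq_smul_mul_of_compress_eq_smul hM₁r hM₂l (hbalQ j₁)
  · simpa only [hM₁idem] using mul_mul_eq_smul_mul_of_compress_eq_smul hM₁r hM₁l (hbalQ j₁)

/-- The computation proving Theorem 5.1(c): members `M₁, M₂` of a refinement of
the family `(Q_j)` satisfy `M₁ P M₂ = 0` if their parents differ, and
`M₁ P M₂ = λ_{j₁} M₁ M₂` if they share the parent `Q_{j₁}`; in particular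
`M₁ P M₁ = λ_{j₁} M₁`. -/
theorem refinement_structure_balance
    {n : ℕ} {J : Type*} [Fintype J]
    (P : Matrix (Fin n) (Fin n) ℝ) (hPsym : Pᵀ = P) (hPidem : P * P = P)
    (Q : J → Matrix (Fin n) (Fin n) ℝ)
    (hQsym : ∀ j, (Q j)ᵀ = Q j) (hQidem : ∀ j, Q j * Q j = Q j)
    (hQorth : ∀ j k, j ≠ k → Q j * Q k = 0)
    (lam : J → ℝ)
    (hbalQ : ∀ j, Q j * P * Q j = lam j • Q j)
    (hadjQ : ∀ j k, j ≠ k → Q j * P * Q k = 0)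
    (M₁ M₂ : Matrix (Fin n) (Fin n) ℝ)
    (hM₁sym : M₁ᵀ = M₁) (hM₁idem : M₁ * M₁ = M₁)
    (hM₂sym : M₂ᵀ = M₂) (hM₂idem : M₂ * M₂ = M₂)
    (j₁ j₂ : J)
    (hM₁l : Q j₁ * M₁ = M₁) (hM₁r : M₁ * Q j₁ = M₁)
    (hM₂l : Q j₂ * M₂ = M₂) (hM₂r : M₂ * Q j₂ = M₂) :
    (j₁ ≠ j₂ → M₁ * P * M₂ = 0) ∧
      (j₁ = j₂ → M₁ * P * M₂ = lam j₁ • (M₁ * M₂)) ∧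
      M₁ * P * M₁ = lam j₁ • M₁ :=
  refinement_structure_balance_general P Q lam hbalQ hadjQ M₁ M₂ hM₁idem j₁ j₂ hM₁l hM₁r hM₂l
end

section
/- Let P be an n×n real symmetric idempotent matrix; let (Q_j)_{j∈J} be a finite mutually orthogonal family of n×n real symmetric idempotents with I_Q := Σ_{j∈J} Q_j, structure balanced in relation to P with efficiency factors (λ_j)_{j∈J}; fix k ∈ J and let R be an n×n real symmetric idempotent with R·I_Q = R. Then P·Q_k·P·R·P·Q_k·P = λ_k²·P·Q_k·R·Q_k·P. Consequently, if λ_k ≠ 0 and R additionally satisfies R·Q_k·R = μ·R with μ ≠ 0, then (P▷Q_k)▷R := λ_k⁻¹·μ⁻¹·(P▷Q_k)·R·(P▷Q_k) equals P▷(Q_k▷R) := λ_k⁻¹·P·(μ⁻¹·Q_k·R·Q_k)·P, where P▷Q_k := λ_k⁻¹·P·Q_k·P. -/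
/-!
Since `R * ∑ j, Q j = R`, and hence by symmetry also `(∑ j, Q j) * R = R`, balance lets `P`
pass between `Q k` and `R` at the cost of the factor `λ_k`: `Q k * P * R = λ_k • (Q k * R)`
and `R * P * Q k = λ_k • (R * Q k)`. Applying this on either side of `R` in
`P Q_k P R P Q_k P` gives the key identity, and associativity of the pertaining projectors is
then scalar bookkeeping.
-/

open Matrix BigOperators

def StructureBalanced {A 𝕜 J : Type*} [Mul A] [Zero A] [SMul 𝕜 A]
    (P : A) (Q : J → A) (lam : J → 𝕜) : Prop :=
  (∀ j, Q j * P * Q j = lam j • Q j) ∧ ∀ j k, j ≠ k → Q j * P * Q k = 0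

namespace StructureBalanced

variable {𝕜 A J : Type*} [CommSemiring 𝕜] [Semiring A] [Algebra 𝕜 A] [Fintype J]
  {P R : A} {Q : J → A} {lam : J → 𝕜}

theorem mul_mul_sum (h : StructureBalanced P Q lam) (k : J) :
    Q k * P * ∑ j, Q j = lam k • Q k := by
  rw [Finset.mul_sum, Finset.sum_eq_single_of_mem k (Finset.mem_univ k)
    fun j _ hj => h.2 k j hj.symm, h.1 k]

theorem sum_mul_mul (h : StructureBalanced P Q lam) (k : J) :
    (∑ j, Q j) * P * Q k = lam k • Q k := by
  rw [Finset.sum_mul, Finset.sum_mul, Finset.sum_eq_single_of_mem k (Finset.mem_univ k)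
    fun j _ hj => h.2 j k hj, h.1 k]

theorem mul_mul_eq_smul_of_sum_mul (h : StructureBalanced P Q lam) (k : J)
    (hR : (∑ j, Q j) * R = R) : Q k * P * R = lam k • (Q k * R) := by
  calc Q k * P * R = Q k * P * (∑ j, Q j) * R := by rw [mul_assoc (Q k * P), hR]
    _ = lam k • (Q k * R) := by rw [h.mul_mul_sum, smul_mul_assoc]

theorem mul_mul_eq_smul_of_mul_sum (h : StructureBalanced P Q lam) (k : J)
    (hR : R * ∑ j, Q j = R) : R * P * Q k = lam k • (R * Q k) := by
  calc R * P * Q k = R * ((∑ j, Q j) * P * Q k) := by rw [← mul_assoc, ← mul_assoc, hR]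
    _ = lam k • (R * Q k) := by rw [h.sum_mul_mul, mul_smul_comm]

end StructureBalanced

theorem mul_mul_mul_mul_eq_sq_smul {𝕜 A : Type*} [CommSemiring 𝕜] [Semiring A] [Algebra 𝕜 A]
    {P X R : A} {c : 𝕜} (hXR : X * P * R = c • (X * R)) (hRX : R * P * X = c • (R * X)) :
    P * X * P * R * P * X * P = c ^ 2 • (P * X * R * X * P) :=
  calc P * X * P * R * P * X * P = P * (X * P * R) * P * X * P := by simp only [mul_assoc]
    _ = c • (P * X * (R * P * X) * P) := by
      rw [hXR]; simp only [mul_smul_comm, smul_mul_assoc, mul_assoc]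
    _ = c ^ 2 • (P * X * R * X * P) := by
      rw [hRX]; simp only [mul_smul_comm, smul_mul_assoc, smul_smul, mul_assoc, sq]

theorem Matrix.mul_eq_right_of_mul_eq_left_of_transpose {m α : Type*} [CommSemiring α]
    [Fintype m] {A B : Matrix m m α} (hA : Aᵀ = A) (hB : Bᵀ = B) (h : A * B = A) :
    B * A = A := by
  simpa only [transpose_mul, hA, hB] using congrArg transpose h

theorem pertaining_projector_assoc_general
    {n : ℕ} {J : Type*} [Fintype J]
    (P : Matrix (Fin n) (Fin n) ℝ)
    (Q : J → Matrix (Fin n) (Fin n) ℝ)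
    (hQsym : ∀ j, (Q j)ᵀ = Q j)
    (lam : J → ℝ)
    (hbalQ : ∀ j, Q j * P * Q j = lam j • Q j)
    (hadjQ : ∀ j k, j ≠ k → Q j * P * Q k = 0)
    (k : J)
    (R : Matrix (Fin n) (Fin n) ℝ) (hRsym : Rᵀ = R)
    (hRsub : R * (∑ j, Q j) = R) :
    P * Q k * P * R * P * Q k * P = (lam k ^ 2) • (P * Q k * R * Q k * P) ∧
      ∀ mu : ℝ, lam k ≠ 0 → mu ≠ 0 → R * Q k * R = mu • R →
        (lam k)⁻¹ • (mu⁻¹ • (((lam k)⁻¹ • (P * Q k * P)) * R *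
            ((lam k)⁻¹ • (P * Q k * P)))) =
          (lam k)⁻¹ • (P * (mu⁻¹ • (Q k * R * Q k)) * P) := by
  have hbal : StructureBalanced P Q lam := ⟨hbalQ, hadjQ⟩
  have hsumR : (∑ j, Q j) * R = R := Matrix.mul_eq_right_of_mul_eq_left_of_transpose hRsym
    (by rw [transpose_sum]; exact Finset.sum_congr rfl fun j _ => hQsym j) hRsub
  have key := mul_mul_mul_mul_eq_sq_smul (hbal.mul_mul_eq_smul_of_sum_mul k hsumR)
    (hbal.mul_mul_eq_smul_of_mul_sum k hRsub)
  refine ⟨key, fun mu hlam _ _ => ?_⟩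
  simp only [smul_mul_assoc, mul_smul_comm, smul_smul, ← mul_assoc] at key ⊢
  rw [key, smul_smul]
  congr 1
  field_simp

/-- Key identity in the proof of Theorem 5.1(d):
`P Q_k P R P Q_k P = λ_k² P Q_k R Q_k P`; consequently the pertaining
projectors associate, `(P ▷ Q_k) ▷ R = P ▷ (Q_k ▷ R)`. -/
theorem pertaining_projector_assoc
    {n : ℕ} {J : Type*} [Fintype J]
    (P : Matrix (Fin n) (Fin n) ℝ) (hPsym : Pᵀ = P) (hPidem : P * P = P)
    (Q : J → Matrix (Fin n) (Fin n) ℝ)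
    (hQsym : ∀ j, (Q j)ᵀ = Q j) (hQidem : ∀ j, Q j * Q j = Q j)
    (hQorth : ∀ j k, j ≠ k → Q j * Q k = 0)
    (lam : J → ℝ)
    (hbalQ : ∀ j, Q j * P * Q j = lam j • Q j)
    (hadjQ : ∀ j k, j ≠ k → Q j * P * Q k = 0)
    (k : J)
    (R : Matrix (Fin n) (Fin n) ℝ) (hRsym : Rᵀ = R) (hRidem : R * R = R)
    (hRsub : R * (∑ j, Q j) = R) :
    P * Q k * P * R * P * Q k * P = (lam k ^ 2) • (P * Q k * R * Q k * P) ∧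
      ∀ mu : ℝ, lam k ≠ 0 → mu ≠ 0 → R * Q k * R = mu • R →
        (lam k)⁻¹ • (mu⁻¹ • (((lam k)⁻¹ • (P * Q k * P)) * R *
            ((lam k)⁻¹ • (P * Q k * P)))) =
          (lam k)⁻¹ • (P * (mu⁻¹ • (Q k * R * Q k)) * P) :=
  pertaining_projector_assoc_general P Q hQsym lam hbalQ hadjQ k R hRsym hRsub
end
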